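/- Let G be an abelian group, Λ a subgroup, R ∈ G, and m a nonzero integer. Suppose for every prime ℓ there is a nonzero integer c_ℓ with v_ℓ(c_ℓ) ≤ v_ℓ(m) and c_ℓ • R ∈ Λ. Then m • R ∈ Λ. -/
import Mathlib

theorem stmt_7 (G : Type*) [AddCommGroup G] (Λ : AddSubgroup G) (R : G) (m : ℤ) (hm : m ≠ 0)
    (h : ∀ ℓ : ℕ, ℓ.Prime → ∃ c : ℤ, c ≠ 0 ∧ padicValInt ℓ c ≤ padicValInt ℓ m ∧ c • R ∈ Λ) :
    m • R ∈ Λ := by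
  set H : AddSubgroup ℤ := Λ.comap (zmultiplesHom G R) with hH
  obtain ⟨d, hd⟩ := Int.subgroup_cyclic H
  have hmemH : ∀ n : ℤ, n ∈ H ↔ d ∣ n := by
    intro n
    rw [hd, AddSubgroup.mem_closure_singleton]
    constructor
    · rintro ⟨k, rfl⟩; exact ⟨k, by simp [smul_eq_mul, mul_comm]⟩
    · rintro ⟨k, rfl⟩; exact ⟨k, by simp [smul_eq_mul, mul_comm]⟩
  have hc : ∀ ℓ : ℕ, ℓ.Prime → ∃ c : ℤ, c ≠ 0 ∧ padicValInt ℓ c ≤ padicValInt ℓ m ∧ d ∣ c := by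
    intro ℓ hℓ
    obtain ⟨c, hc0, hcv, hcΛ⟩ := h ℓ hℓ
    exact ⟨c, hc0, hcv, (hmemH c).mp hcΛ⟩
  have hd0 : d ≠ 0 := by
    rintro rfl
    obtain ⟨c, hc0, -, hdc⟩ := hc 2 Nat.prime_two
    exact hc0 (zero_dvd_iff.mp hdc)
  -- show d ∣ m via factorizations
  have hdvd : d ∣ m := by
    rw [Int.natAbs_dvd_natAbs.symm]
    rw [← Nat.factorization_le_iff_dvd (Int.natAbs_ne_zero.mpr hd0)
      (Int.natAbs_ne_zero.mpr hm)]
    intro p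
    by_cases hp : p.Prime
    · obtain ⟨c, hc0, hcv, hdc⟩ := hc p hp
      haveI : Fact p.Prime := ⟨hp⟩
      have h1 : padicValInt p d ≤ padicValInt p c := by
        have key : (p : ℤ) ^ padicValInt p d ∣ c := (padicValInt_dvd d).trans hdc
        rcases (padicValInt_dvd_iff _ c).mp key with h | h
        · exact absurd h hc0
        · exact h
      rw [Nat.factorization_def _ hp, Nat.factorization_def _ hp]
      have : padicValNat p d.natAbs ≤ padicValNat p m.natAbs := by
        simpa [padicValInt] using h1.trans hcv
      exact this
    · simp [Nat.factorization_eq_zero_of_not_prime _ hp]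
  have : m ∈ H := (hmemH m).mpr hdvd
  simpa [hH] using this
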